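/- arXiv:2412.11190 — 3 statements merged into one kernel-verified Lean document; each statement's English description precedes it below -/
import Mathlib

section
/- Let 0 < δ ≤ Δ ≤ 1 and 0 < Δ' ≤ Δ. Consider the circular arc C centered at the point ((δ² + Δ²)/(2δ), 0) passing through (0,0) and (δ, Δ). If q is a point on C with y-coordinate Δ' and θ is the angle of the sub-arc of C from (0,0) to q, then θ ≥ Δ' δ / Δ². -/
open InnerProductGeometry

/-! The sub-arc from the origin to `q` has length `r θ`, where `r = (δ² + Δ²) / (2δ) ≤ Δ² / δ` is
the radius, and this is at least the chord length `‖q‖ ≥ Δ'`. -/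

/-- Chord length is at most arc length. -/
theorem norm_sub_le_norm_mul_angle {V : Type*} [NormedAddCommGroup V] [InnerProductSpace ℝ V]
    {x y : V} (h : ‖x‖ = ‖y‖) : ‖x - y‖ ≤ ‖x‖ * angle x y := by
  have hcos := Real.one_sub_sq_div_two_le_cos (x := angle x y)
  have hsq : ‖x - y‖ ^ 2 ≤ (‖x‖ * angle x y) ^ 2 := by
    rw [sq, norm_sub_sq_eq_norm_sq_add_norm_sq_sub_two_mul_norm_mul_norm_mul_cos_angle, ← h]
    nlinarith [sq_nonneg ‖x‖]
  exact (pow_le_pow_iff_left₀ (norm_nonneg _)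
    (mul_nonneg (norm_nonneg _) (angle_nonneg x y)) two_ne_zero).1 hsq

theorem stmt4_general (δ Δ Δ' : ℝ) (hδ : 0 < δ) (hδΔ : δ ≤ Δ)
    (c q : EuclideanSpace ℝ (Fin 2))
    (hc0 : c 0 = (δ ^ 2 + Δ ^ 2) / (2 * δ)) (hc1 : c 1 = 0)
    (hq : ‖q - c‖ = ‖c‖)  -- `q` is on the circle through the origin
    (hqy : q 1 = Δ')
    (θ : ℝ) (hθ : θ = angle (0 - c) (q - c)) :
    Δ' * δ / Δ ^ 2 ≤ θ := by
  have hΔ : 0 < Δ := hδ.trans_le hδΔ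
  have hθ0 : 0 ≤ θ := hθ ▸ angle_nonneg _ _
  have hradius : ‖c‖ = (δ ^ 2 + Δ ^ 2) / (2 * δ) := by
    rw [← hc0]
    refine (pow_left_inj₀ (norm_nonneg c) (hc0 ▸ by positivity) two_ne_zero).1 ?_
    simp [EuclideanSpace.real_norm_sq_eq, Fin.sum_univ_two, hc1]
  have hchord : ‖q‖ ≤ ‖c‖ * θ := by
    have := norm_sub_le_norm_mul_angle (x := q - c) (y := 0 - c) (by simpa using hq)
    rwa [sub_sub_sub_cancel_right, sub_zero, hq, angle_comm, ← hθ] at this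
  have hy : Δ' ≤ ‖q‖ := hqy ▸ (le_abs_self _).trans (PiLp.norm_apply_le q 1)
  have hradius_le : ‖c‖ ≤ Δ ^ 2 / δ := by
    rw [hradius, div_le_div_iff₀ (by positivity) hδ]
    nlinarith [mul_le_mul_of_nonneg_right (mul_self_le_mul_self hδ.le hδΔ) hδ.le]
  calc Δ' * δ / Δ ^ 2 ≤ ‖c‖ * θ * δ / Δ ^ 2 := by gcongr; exact hy.trans hchord
    _ ≤ Δ ^ 2 / δ * θ * δ / Δ ^ 2 := by gcongr
    _ = θ := by field_simp

/-- Let `0 < δ ≤ Δ ≤ 1`, `0 < Δ' ≤ Δ`, and let `C` be the circle centered at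
`c = ((δ²+Δ²)/(2δ), 0)` through `(0,0)` (and `(δ,Δ)`).  If `q` lies on `C` with
`y`-coordinate `Δ'`, and `θ` is the angle of the sub-arc of `C` from `(0,0)` to `q`
(i.e. the angle at the center between `(0,0)` and `q`), then `θ ≥ Δ' δ / Δ²`. -/
theorem stmt4 (δ Δ Δ' : ℝ) (hδ : 0 < δ) (hδΔ : δ ≤ Δ) (hΔ : Δ ≤ 1)
    (hΔ' : 0 < Δ') (hΔ'Δ : Δ' ≤ Δ)
    (c q : EuclideanSpace ℝ (Fin 2))
    (hc0 : c 0 = (δ ^ 2 + Δ ^ 2) / (2 * δ)) (hc1 : c 1 = 0)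
    (hq : ‖q - c‖ = ‖c‖)  -- `q` is on the circle through the origin
    (hqy : q 1 = Δ')
    (θ : ℝ) (hθ : θ = angle (0 - c) (q - c)) :
    Δ' * δ / Δ ^ 2 ≤ θ :=
  stmt4_general δ Δ Δ' hδ hδΔ c q hc0 hc1 hq hqy θ hθ
end

section
/- Let (δ_n) and (Δ_n) be positive sequences with δ₁ = Δ₁ = 1, Δ_{n+1} ≤ c δ_n^{n+1}, and δ_{n+1} ≤ c Δ_{n+1} δ_n for all n ≥ 1, where 0 < c < 1. Then both sequences are decreasing, converge to 0, and the ratio δ_n / Δ_n tends to 0 as n → ∞. -/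
/-! By induction `δ n ≤ 1`, so `Δ (n + 1) ≤ c * δ n` and `δ (n + 1) ≤ c * Δ (n + 1)`. Hence
`δ n ≤ Δ n`, both sequences shrink by the factor `c` at every step, and
`δ (n + 1) / Δ (n + 1) ≤ c * δ n`. -/

open Filter Topology

/-- The sequences are indexed from `1`; their values at `0` are unconstrained. -/
structure DeltaRecursion (c : ℝ) (δ Δ : ℕ → ℝ) : Prop where
  c_pos : 0 < c
  c_lt_one : c < 1
  δ_pos : ∀ n, 1 ≤ n → 0 < δ n
  Δ_pos : ∀ n, 1 ≤ n → 0 < Δ n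
  δ_one : δ 1 = 1
  Δ_one : Δ 1 = 1
  Δ_succ_le : ∀ n, 1 ≤ n → Δ (n + 1) ≤ c * δ n ^ (n + 1)
  δ_succ_le : ∀ n, 1 ≤ n → δ (n + 1) ≤ c * Δ (n + 1) * δ n

theorem tendsto_zero_of_succ_le_mul {u : ℕ → ℝ} {c : ℝ} (hc0 : 0 ≤ c) (hc1 : c < 1)
    (hu0 : ∀ n, 0 ≤ u n) (hu : ∀ n, u (n + 1) ≤ c * u n) : Tendsto u atTop (𝓝 0) := by
  have hgeom : Tendsto (fun n => c ^ n * u 0) atTop (𝓝 0) := by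
    simpa using (tendsto_pow_atTop_nhds_zero_of_lt_one hc0 hc1).mul_const (u 0)
  exact squeeze_zero hu0 (fun n => le_geom hc0 n fun k _ => hu k) hgeom

namespace DeltaRecursion

variable {c : ℝ} {δ Δ : ℕ → ℝ} (h : DeltaRecursion c δ Δ)
include h

theorem δ_le_one : ∀ n, 1 ≤ n → δ n ≤ 1 := by
  intro n hn
  induction n, hn using Nat.le_induction with
  | base => exact h.δ_one.le
  | succ n hn ih =>
    have hδ := (h.δ_pos n hn).le
    have hΔ_le_one : Δ (n + 1) ≤ 1 :=
      (h.Δ_succ_le n hn).trans (mul_le_one₀ h.c_lt_one.le (pow_nonneg hδ _) (pow_le_one₀ hδ ih))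
    calc δ (n + 1) ≤ c * Δ (n + 1) * δ n := h.δ_succ_le n hn
      _ ≤ 1 * 1 * 1 := by
        gcongr
        exacts [(h.Δ_pos (n + 1) (by omega)).le, h.c_lt_one.le]
      _ = 1 := by norm_num

theorem Δ_succ_le_mul_δ (n : ℕ) (hn : 1 ≤ n) : Δ (n + 1) ≤ c * δ n := by
  have hpow : δ n ^ (n + 1) ≤ δ n :=
    pow_le_of_le_one (h.δ_pos n hn).le (h.δ_le_one n hn) (by omega)
  exact (h.Δ_succ_le n hn).trans (mul_le_mul_of_nonneg_left hpow h.c_pos.le)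

theorem δ_succ_le_mul_Δ_succ (n : ℕ) (hn : 1 ≤ n) : δ (n + 1) ≤ c * Δ (n + 1) := by
  have hcΔ : 0 ≤ c * Δ (n + 1) := mul_nonneg h.c_pos.le (h.Δ_pos (n + 1) (by omega)).le
  calc δ (n + 1) ≤ c * Δ (n + 1) * δ n := h.δ_succ_le n hn
    _ ≤ c * Δ (n + 1) * 1 := mul_le_mul_of_nonneg_left (h.δ_le_one n hn) hcΔ
    _ = c * Δ (n + 1) := mul_one _

theorem δ_le_Δ : ∀ n, 1 ≤ n → δ n ≤ Δ n
  | 1, _ => by rw [h.δ_one, h.Δ_one]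
  | n + 2, _ =>
    calc δ (n + 2) ≤ c * Δ (n + 2) := h.δ_succ_le_mul_Δ_succ (n + 1) (by omega)
      _ ≤ Δ (n + 2) := mul_le_of_le_one_left (h.Δ_pos _ (by omega)).le h.c_lt_one.le

theorem Δ_succ_le_mul (n : ℕ) (hn : 1 ≤ n) : Δ (n + 1) ≤ c * Δ n :=
  (h.Δ_succ_le_mul_δ n hn).trans (mul_le_mul_of_nonneg_left (h.δ_le_Δ n hn) h.c_pos.le)

theorem δ_succ_le_mul (n : ℕ) (hn : 1 ≤ n) : δ (n + 1) ≤ c * δ n :=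
  calc δ (n + 1) ≤ c * Δ (n + 1) := h.δ_succ_le_mul_Δ_succ n hn
    _ ≤ c * δ n := mul_le_mul_of_nonneg_left
      ((h.Δ_succ_le_mul_δ n hn).trans (mul_le_of_le_one_left (h.δ_pos n hn).le h.c_lt_one.le))
      h.c_pos.le

theorem δ_succ_lt (n : ℕ) (hn : 1 ≤ n) : δ (n + 1) < δ n :=
  (h.δ_succ_le_mul n hn).trans_lt (mul_lt_of_lt_one_left (h.δ_pos n hn) h.c_lt_one)

theorem Δ_succ_lt (n : ℕ) (hn : 1 ≤ n) : Δ (n + 1) < Δ n :=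
  (h.Δ_succ_le_mul n hn).trans_lt (mul_lt_of_lt_one_left (h.Δ_pos n hn) h.c_lt_one)

theorem tendsto_δ : Tendsto δ atTop (𝓝 0) :=
  (tendsto_add_atTop_iff_nat 1).1 <| tendsto_zero_of_succ_le_mul h.c_pos.le h.c_lt_one
    (fun n => (h.δ_pos (n + 1) (by omega)).le) fun n => h.δ_succ_le_mul (n + 1) (by omega)

theorem tendsto_Δ : Tendsto Δ atTop (𝓝 0) :=
  (tendsto_add_atTop_iff_nat 1).1 <| tendsto_zero_of_succ_le_mul h.c_pos.le h.c_lt_one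
    (fun n => (h.Δ_pos (n + 1) (by omega)).le) fun n => h.Δ_succ_le_mul (n + 1) (by omega)

theorem tendsto_δ_div_Δ : Tendsto (fun n => δ n / Δ n) atTop (𝓝 0) := by
  refine (tendsto_add_atTop_iff_nat 1).1 <|
    squeeze_zero' (Eventually.of_forall fun n => ?_) ?_ (by simpa using h.tendsto_δ.const_mul c)
  · exact div_nonneg (h.δ_pos (n + 1) (by omega)).le (h.Δ_pos (n + 1) (by omega)).le
  filter_upwards [eventually_ge_atTop 1] with n hn
  rw [div_le_iff₀ (h.Δ_pos (n + 1) (by omega))]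
  calc δ (n + 1) ≤ c * Δ (n + 1) * δ n := h.δ_succ_le n hn
    _ = c * δ n * Δ (n + 1) := by ring

end DeltaRecursion

/-- If `δ₁ = Δ₁ = 1`, `Δ_{n+1} ≤ c δ_n^{n+1}` and `δ_{n+1} ≤ c Δ_{n+1} δ_n` for all
`n ≥ 1`, with `0 < c < 1` and both sequences positive, then both sequences are
decreasing, tend to `0`, and `δ_n / Δ_n → 0`. -/
theorem stmt6 (c : ℝ) (hc0 : 0 < c) (hc1 : c < 1)
    (δ Δ : ℕ → ℝ)
    (hδpos : ∀ n, 1 ≤ n → 0 < δ n) (hΔpos : ∀ n, 1 ≤ n → 0 < Δ n)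
    (hδ1 : δ 1 = 1) (hΔ1 : Δ 1 = 1)
    (hΔ : ∀ n, 1 ≤ n → Δ (n + 1) ≤ c * δ n ^ (n + 1))
    (hδ : ∀ n, 1 ≤ n → δ (n + 1) ≤ c * Δ (n + 1) * δ n) :
    (∀ n, 1 ≤ n → δ (n + 1) < δ n) ∧ (∀ n, 1 ≤ n → Δ (n + 1) < Δ n) ∧
    Tendsto δ atTop (nhds 0) ∧ Tendsto Δ atTop (nhds 0) ∧
    Tendsto (fun n => δ n / Δ n) atTop (nhds 0) := by
  have h : DeltaRecursion c δ Δ := ⟨hc0, hc1, hδpos, hΔpos, hδ1, hΔ1, hΔ, hδ⟩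
  exact ⟨h.δ_succ_lt, h.Δ_succ_lt, h.tendsto_δ, h.tendsto_Δ, h.tendsto_δ_div_Δ⟩
end

section
/- Suppose N ≤ (Δ_n/Δ_{n+1})(1 + c₂ δ_{n-1}) where θ_{n+1} = c Δ_{n+1} δ_n, θ_n = c Δ_n δ_{n-1}, δ_n ≤ c Δ_n δ_{n-1}, Δ_n ≤ 1, δ_{n-1} ≤ 1, and c(1 + c₂) < 1 with c, c₂ > 0. Then N θ_{n+1} < θ_n. -/
lemma mul_mul_one_add_mul_lt_one {c c₂ Δ δ : ℝ} (hc : 0 ≤ c) (hc₂ : 0 ≤ c₂)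
    (hδ : 0 ≤ δ) (hΔle : Δ ≤ 1) (hδle : δ ≤ 1) (hcc₂ : c * (1 + c₂) < 1) :
    c * Δ * (1 + c₂ * δ) < 1 :=
  calc c * Δ * (1 + c₂ * δ) ≤ c * 1 * (1 + c₂ * 1) := by gcongr
    _ = c * (1 + c₂) := by ring
    _ < 1 := hcc₂

theorem stmt9_general (c c₂ Δn Δn1 δn0 δn N θn θn1 : ℝ)
    (hc : 0 < c) (hc₂ : 0 < c₂)
    (hΔn1 : 0 < Δn1) (hδn0 : 0 < δn0) (hδn : 0 < δn)
    (hθn : θn = c * Δn * δn0) (hθn1 : θn1 = c * Δn1 * δn)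
    (hδnle : δn ≤ c * Δn * δn0) (hΔnle : Δn ≤ 1) (hδn0le : δn0 ≤ 1)
    (hcc₂ : c * (1 + c₂) < 1)
    (hN : N ≤ (Δn / Δn1) * (1 + c₂ * δn0)) :
    N * θn1 < θn := by
  subst hθn hθn1
  have hfactor : c * Δn * (1 + c₂ * δn0) < 1 :=
    mul_mul_one_add_mul_lt_one hc.le hc₂.le hδn0.le hΔnle hδn0le hcc₂
  calc N * (c * Δn1 * δn) ≤ Δn / Δn1 * (1 + c₂ * δn0) * (c * Δn1 * δn) := by gcongr
    _ = c * Δn * (1 + c₂ * δn0) * δn := by field_simp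
    _ < 1 * δn := by gcongr
    _ ≤ c * Δn * δn0 := by rwa [one_mul]

/-- If `N ≤ (Δ_n/Δ_{n+1})(1 + c₂ δ_{n-1})`, `θ_n = c Δ_n δ_{n-1}`,
`θ_{n+1} = c Δ_{n+1} δ_n`, `δ_n ≤ c Δ_n δ_{n-1}`, `Δ_n ≤ 1`, `δ_{n-1} ≤ 1` and
`c(1 + c₂) < 1`, then `N θ_{n+1} < θ_n`. -/
theorem stmt9 (c c₂ Δn Δn1 δn0 δn N θn θn1 : ℝ)
    (hc : 0 < c) (hc₂ : 0 < c₂)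
    (hΔn : 0 < Δn) (hΔn1 : 0 < Δn1) (hδn0 : 0 < δn0) (hδn : 0 < δn)
    (hθn : θn = c * Δn * δn0) (hθn1 : θn1 = c * Δn1 * δn)
    (hδnle : δn ≤ c * Δn * δn0) (hΔnle : Δn ≤ 1) (hδn0le : δn0 ≤ 1)
    (hcc₂ : c * (1 + c₂) < 1)
    (hN : N ≤ (Δn / Δn1) * (1 + c₂ * δn0)) :
    N * θn1 < θn :=
  stmt9_general c c₂ Δn Δn1 δn0 δn N θn θn1 hc hc₂ hΔn1 hδn0 hδn hθn hθn1 hδnle hΔnle hδn0le hcc₂ hN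
end
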